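/- arXiv:2406.13243 — 2 statements merged into one kernel-verified Lean document; each statement's English description precedes it below -/
import Mathlib

section
/- For the binary symmetric channel with crossover probability p (0 < p < 1/2), with X uniform on {0,1} and Y = X ⊕ Z where Pr(Z=1)=p, the hypothesis testing mutual information I_H^ε(X;Y) := D_H^ε(P_{XY} ‖ P_X × P_Y) equals: 0 for 0 < ε < p/2; log₂(4/3) for p/2 ≤ ε < p; 1 for p ≤ ε < (1+p)/2; and 2 for (1+p)/2 ≤ ε < 1. -/
set_option maxHeartbeats 800000


/-- Classical hypothesis-testing relative entropy on a finite alphabet: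
`D_H^ε(P‖Q) = -log₂ inf { Q(A) : A ⊆ X, P(A) ≥ 1 - ε }`. -/
noncomputable def DH {X : Type*} [Fintype X] (ε : ℝ) (P Q : X → ℝ) : ℝ :=
  - Real.logb 2
      (sInf {q : ℝ | ∃ A : Finset X, 1 - ε ≤ ∑ x ∈ A, P x ∧ q = ∑ x ∈ A, Q x})

lemma sum_expand14 (f : Bool × Bool → ℝ) (A : Finset (Bool × Bool)) :
    ∑ x ∈ A, f x =
      (if (false, false) ∈ A then f (false, false) else 0) +
      (if (false, true) ∈ A then f (false, true) else 0) +
      (if (true, false) ∈ A then f (true, false) else 0) +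
      (if (true, true) ∈ A then f (true, true) else 0) := by
  classical
  have h : ∑ x ∈ A, f x = ∑ x ∈ Finset.univ, if x ∈ A then f x else 0 := by
    rw [Finset.sum_ite_mem, Finset.univ_inter]
  rw [h]
  rw [Fintype.sum_prod_type, Fintype.sum_bool, Fintype.sum_bool, Fintype.sum_bool]
  ring

lemma sInf_eq14 (ε q₀ : ℝ) (P Q : Bool × Bool → ℝ) (A₀ : Finset (Bool × Bool))
    (h₁ : 1 - ε ≤ ∑ x ∈ A₀, P x) (h₂ : q₀ = ∑ x ∈ A₀, Q x)
    (hlb : ∀ A : Finset (Bool × Bool), 1 - ε ≤ ∑ x ∈ A, P x → q₀ ≤ ∑ x ∈ A, Q x) :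
    sInf {q : ℝ | ∃ A : Finset (Bool × Bool), 1 - ε ≤ ∑ x ∈ A, P x ∧ q = ∑ x ∈ A, Q x} = q₀ := by
  apply IsLeast.csInf_eq
  constructor
  · exact ⟨A₀, h₁, h₂⟩
  · rintro q ⟨A, hA, rfl⟩
    exact hlb A hA

/-- For the binary symmetric channel with crossover probability `p` (`0 < p < 1/2`),
with `X` uniform on `{0,1}` and `Y = X ⊕ Z`, `Pr(Z = 1) = p`, the hypothesis-testing
mutual information `I_H^ε(X;Y) = D_H^ε(P_XY ‖ P_X × P_Y)` equals `0` for
`0 < ε < p/2`; `log₂(4/3)` for `p/2 ≤ ε < p`; `1` for `p ≤ ε < (1+p)/2`; and `2` for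
`(1+p)/2 ≤ ε < 1`. -/
theorem stmt14 (p ε : ℝ) (hp0 : 0 < p) (hp1 : p < 1 / 2) :
    ((0 < ε ∧ ε < p / 2) →
      DH ε (fun z : Bool × Bool => (1 / 2) * (if z.2 = z.1 then 1 - p else p))
          (fun _ : Bool × Bool => (1 / 4 : ℝ)) = 0) ∧
    ((p / 2 ≤ ε ∧ ε < p) →
      DH ε (fun z : Bool × Bool => (1 / 2) * (if z.2 = z.1 then 1 - p else p))
          (fun _ : Bool × Bool => (1 / 4 : ℝ)) = Real.logb 2 (4 / 3)) ∧
    ((p ≤ ε ∧ ε < (1 + p) / 2) →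
      DH ε (fun z : Bool × Bool => (1 / 2) * (if z.2 = z.1 then 1 - p else p))
          (fun _ : Bool × Bool => (1 / 4 : ℝ)) = 1) ∧
    (((1 + p) / 2 ≤ ε ∧ ε < 1) →
      DH ε (fun z : Bool × Bool => (1 / 2) * (if z.2 = z.1 then 1 - p else p))
          (fun _ : Bool × Bool => (1 / 4 : ℝ)) = 2) := by
  set P : Bool × Bool → ℝ := fun z => (1 / 2) * (if z.2 = z.1 then 1 - p else p) with hP
  set Q : Bool × Bool → ℝ := fun _ => (1 / 4 : ℝ) with hQ
  refine ⟨?_, ?_, ?_, ?_⟩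
  · rintro ⟨h1, h2⟩
    have : sInf {q : ℝ | ∃ A : Finset (Bool × Bool), 1 - ε ≤ ∑ x ∈ A, P x ∧ q = ∑ x ∈ A, Q x}
        = 1 := by
      apply sInf_eq14 ε 1 P Q Finset.univ
      · rw [sum_expand14]; simp [hP]; ring_nf; linarith
      · rw [sum_expand14]; simp [hQ]; norm_num
      · intro A hA
        rw [sum_expand14] at hA ⊢
        simp only [hP, hQ] at hA ⊢
        norm_num at hA ⊢
        split_ifs at hA ⊢ <;> linarith
    rw [DH, this, Real.logb_one, neg_zero]
  · rintro ⟨h1, h2⟩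
    have : sInf {q : ℝ | ∃ A : Finset (Bool × Bool), 1 - ε ≤ ∑ x ∈ A, P x ∧ q = ∑ x ∈ A, Q x}
        = 3 / 4 := by
      apply sInf_eq14 ε (3/4) P Q {(false, false), (true, false), (true, true)}
      · rw [sum_expand14]; simp [hP]; ring_nf; linarith
      · rw [sum_expand14]; simp [hQ]; norm_num
      · intro A hA
        rw [sum_expand14] at hA ⊢
        simp only [hP, hQ] at hA ⊢
        norm_num at hA ⊢
        split_ifs at hA ⊢ <;> linarith
    rw [DH, this]
    rw [show (4/3 : ℝ) = (3/4 : ℝ)⁻¹ by norm_num, Real.logb_inv]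
  · rintro ⟨h1, h2⟩
    have : sInf {q : ℝ | ∃ A : Finset (Bool × Bool), 1 - ε ≤ ∑ x ∈ A, P x ∧ q = ∑ x ∈ A, Q x}
        = 1 / 2 := by
      apply sInf_eq14 ε (1/2) P Q {(false, false), (true, true)}
      · rw [sum_expand14]; simp [hP]; ring_nf; linarith
      · rw [sum_expand14]; simp [hQ]; norm_num
      · intro A hA
        rw [sum_expand14] at hA ⊢
        simp only [hP, hQ] at hA ⊢
        norm_num at hA ⊢
        split_ifs at hA ⊢ <;> linarith
    rw [DH, this]
    rw [show (1/2 : ℝ) = (2 : ℝ)⁻¹ by norm_num, Real.logb_inv,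
      Real.logb_self_eq_one (by norm_num)]
    norm_num
  · rintro ⟨h1, h2⟩
    have : sInf {q : ℝ | ∃ A : Finset (Bool × Bool), 1 - ε ≤ ∑ x ∈ A, P x ∧ q = ∑ x ∈ A, Q x}
        = 1 / 4 := by
      apply sInf_eq14 ε (1/4) P Q {(false, false)}
      · rw [sum_expand14]; simp [hP]; ring_nf; linarith
      · rw [sum_expand14]; simp [hQ]
      · intro A hA
        rw [sum_expand14] at hA ⊢
        simp only [hP, hQ] at hA ⊢
        norm_num at hA ⊢
        split_ifs at hA ⊢ <;> linarith
    rw [DH, this]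
    rw [show (1/4 : ℝ) = ((2 : ℝ) ^ (2 : ℕ))⁻¹ by norm_num, Real.logb_inv,
      Real.logb_pow, Real.logb_self_eq_one (by norm_num)]
    norm_num
end

section
/- In the same random group-code ensemble, for a ∈ J, ã ∈ T_{θ̂}(a), and x, x̃ ∈ G: Pr(φ(a)+V = x and φ(ã)+V = x̃) equals (1/|G|)·(1/|H_{θ̂}|) if x̃ − x ∈ H_{θ̂}, and 0 otherwise, where H_{θ̂} = ⊕_{(p,r,m)} p^{θ(θ̂)_{p,r}} Z_{p^r} and θ(θ̂)_{p,r} = min over s with k_{p,s} ≠ 0 of (|r−s|⁺ + θ̂_{p,s}). -/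
open AddSubgroup

namespace GroupCodeEnsemble

variable (ιJ ιG : Type) [Fintype ιJ] [Fintype ιG]

/-- The message group `J = ⊕_{(q,s)} Z_{q^s}^{k_{q,s}}`, indexed by `ιJ`. -/
abbrev JGrp (Q S k : ιJ → ℕ) : Type := ∀ i : ιJ, Fin (k i) → ZMod (Q i ^ S i)

/-- The channel-input group `G = ⊕_{(p,r)} Z_{p^r}` (one ring per index `j : ιG`). -/
abbrev GGrp (P R : ιG → ℕ) : Type := ∀ j : ιG, ZMod (P j ^ R j)

/-- Admissibility of a generator `g_{(q,s,l)→(p,r,m)}`: it is `0` when `q ≠ p`, and lies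
in `p^{|r-s|⁺} Z_{p^r}` when `q = p` (note `R j - S i` is truncated subtraction, i.e.
`|r - s|⁺`). -/
def GenOK (Q S : ιJ → ℕ) (P R : ιG → ℕ) (i : ιJ) (j : ιG)
    (x : ZMod (P j ^ R j)) : Prop :=
  (Q i ≠ P j → x = 0) ∧
  (Q i = P j → x ∈ zmultiples ((P j : ZMod (P j ^ R j)) ^ (R j - S i)))

/-- The set of admissible generator tuples of the ensemble. -/
abbrev Gen (Q S k : ιJ → ℕ) (P R : ιG → ℕ) : Type :=
  ∀ i : ιJ, ∀ j : ιG, Fin (k i) →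
    {x : ZMod (P j ^ R j) // GenOK ιJ ιG Q S P R i j x}

/-- The encoding map `φ(a) = ⊕_j Σ_{(i,l)} a_{i,l} · g_{(i,l)→j}`. -/
noncomputable def encode (Q S k : ιJ → ℕ) (P R : ιG → ℕ)
    (g : Gen ιJ ιG Q S k P R) (a : JGrp ιJ Q S k) : GGrp ιG P R :=
  fun j => ∑ i : ιJ, ∑ l : Fin (k i), (a i l).val • ((g i j l : ZMod (P j ^ R j)))

/-- Membership of `x` in the class indexed by `θ` (`T_θ̂`-classes), with the convention
that the class `θ = s` is `{0}`. -/
def inClass (p s k θ : ℕ) (x : Fin k → ZMod (p ^ s)) : Prop :=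
  if θ < s then
    (∀ l, x l ∈ zmultiples ((p : ZMod (p ^ s)) ^ θ)) ∧
    ¬ (∀ l, x l ∈ zmultiples ((p : ZMod (p ^ s)) ^ (θ + 1)))
  else x = 0

/-- The exponent `θ(θ̂)_{p,r} = min_{s : k_{p,s} ≠ 0} (|r-s|⁺ + θ̂_{p,s})` defining the
subgroup `H_θ̂`. -/
noncomputable def thetaG (Q S k : ιJ → ℕ) (P R : ιG → ℕ) (θ : ιJ → ℕ) (j : ιG) : ℕ :=
  sInf {n : ℕ | ∃ i : ιJ, Q i = P j ∧ 0 < k i ∧ n = (R j - S i) + θ i}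

/-!
Once `g` is fixed, the first equation determines the dither `v`, so the event has as many
outcomes as there are generator tuples `g` with `φ_g(ã) - φ_g(a) = x̃ - x`. This difference is
additive in `g`; its fibres over the range all have the size of its kernel, and
`|Gen| = |ker| · |range|`. The range is exactly `H_θ̂`: every term `(ã - a)_{i,l} · g_{i,l→j}`
lies in `p^{|r-s|⁺ + θ̂_{p,s}} Z_{p^r}`, and for the `s` attaining the minimum a coordinate of
`ã - a` of exact valuation `θ̂_{p,s}`, say `p^{θ̂_{p,s}} u` with `u` a unit, paired with the
generator `u⁻¹ p^{|r-s|⁺}`, produces `p^{θ(θ̂)_{p,r}}` in the `j`-th coordinate.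
-/

section DitheredPair

variable {A B : Type*} [AddCommGroup A] [AddCommGroup B]

lemma card_fiber_eq_card_ker (F : A →+ B) {z : B} (hz : z ∈ F.range) :
    Nat.card {g // F g = z} = Nat.card F.ker := by
  obtain ⟨g₀, rfl⟩ := hz
  refine Nat.card_congr
    { toFun := fun g => ⟨g - g₀, by simp [AddMonoidHom.mem_ker, g.2]⟩
      invFun := fun g => ⟨g + g₀, by simp [AddMonoidHom.mem_ker.mp g.2]⟩
      left_inv := fun g => by simp
      right_inv := fun g => by simp }

def ditheredPairEquiv (φ ψ : A →+ B) (x y : B) :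
    {gv : A × B // φ gv.1 + gv.2 = x ∧ ψ gv.1 + gv.2 = y} ≃ {g // (ψ - φ) g = y - x} where
  toFun gv := ⟨gv.1.1, by simp [← gv.2.1, ← gv.2.2]⟩
  invFun g := ⟨(g.1, x - φ g.1), add_sub_cancel _ _, by
    show ψ g.1 + (x - φ g.1) = y
    rw [← sub_add_cancel (ψ g.1) (φ g.1), ← AddMonoidHom.sub_apply, g.2]
    abel⟩
  left_inv gv := by
    ext
    · rfl
    · exact sub_eq_of_eq_add' gv.2.1.symm
  right_inv g := rfl

theorem card_ditheredPair_div_of_mem [Finite A] [Finite B] (φ ψ : A →+ B) {x y : B}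
    (h : y - x ∈ (ψ - φ).range) :
    (Nat.card {gv : A × B // φ gv.1 + gv.2 = x ∧ ψ gv.1 + gv.2 = y} : ℝ) / Nat.card (A × B)
      = ((Nat.card B : ℝ) * Nat.card (ψ - φ).range)⁻¹ := by
  have hA : Nat.card A = Nat.card (ψ - φ).ker * Nat.card (ψ - φ).range := by
    rw [← AddSubgroup.index_ker, AddSubgroup.card_mul_index]
  have hker : (Nat.card (ψ - φ).ker : ℝ) ≠ 0 := Nat.cast_ne_zero.mpr Nat.card_pos.ne'
  rw [Nat.card_congr (ditheredPairEquiv φ ψ x y), card_fiber_eq_card_ker _ h, Nat.card_prod, hA]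
  push_cast
  field_simp

theorem card_ditheredPair_eq_zero_of_notMem (φ ψ : A →+ B) {x y : B}
    (h : y - x ∉ (ψ - φ).range) :
    Nat.card {gv : A × B // φ gv.1 + gv.2 = x ∧ ψ gv.1 + gv.2 = y} = 0 := by
  have : IsEmpty {g // (ψ - φ) g = y - x} := ⟨fun g => h ⟨g.1, g.2⟩⟩
  rw [Nat.card_congr (ditheredPairEquiv φ ψ x y), Nat.card_of_isEmpty]

end DitheredPair

lemma ZMod.mem_zmultiples_iff_exists_mul {N : ℕ} {x y : ZMod N} :
    x ∈ zmultiples y ↔ ∃ c : ZMod N, c * y = x := by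
  refine mem_zmultiples_iff.trans ⟨fun ⟨n, hn⟩ => ⟨n, by rw [← hn, zsmul_eq_mul]⟩, ?_⟩
  rintro ⟨c, rfl⟩
  obtain ⟨n, rfl⟩ := ZMod.intCast_surjective c
  exact ⟨n, zsmul_eq_mul _ _⟩

lemma ZMod.pow_dvd_val_iff_mem_zmultiples {p s e : ℕ} [NeZero (p ^ s)] (he : e ≤ s)
    (x : ZMod (p ^ s)) : p ^ e ∣ x.val ↔ x ∈ zmultiples ((p : ZMod (p ^ s)) ^ e) := by
  rw [ZMod.mem_zmultiples_iff_exists_mul]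
  constructor
  · rintro ⟨t, ht⟩
    exact ⟨t, by rw [← ZMod.natCast_zmod_val x, ht]; push_cast; ring⟩
  · rintro ⟨c, rfl⟩
    rw [← ZMod.natCast_zmod_val c, ← Nat.cast_pow, ← Nat.cast_mul, ZMod.val_natCast]
    exact (Nat.dvd_mod_iff (pow_dvd_pow p he)).mpr (dvd_mul_left _ _)

lemma ZMod.pow_eq_zero_of_le {p r e : ℕ} (h : r ≤ e) : (p : ZMod (p ^ r)) ^ e = 0 := by
  rw [← Nat.cast_pow, ZMod.natCast_eq_zero_iff]
  exact pow_dvd_pow p h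

lemma ZMod.val_sub_nsmul {M : Type*} [AddCommGroup M] {n : ℕ} [NeZero n] {x : M}
    (hx : n • x = 0) (u v : ZMod n) : (u - v).val • x = u.val • x - v.val • x := by
  let f : ZMod n →+ M := ZMod.lift n ⟨zmultiplesHom M x, by simpa using hx⟩
  have hf (w : ZMod n) : f w = w.val • x := by
    calc f w = f ((w.val : ℤ) : ZMod n) := by rw [Int.cast_natCast, ZMod.natCast_zmod_val]
      _ = w.val • x := by rw [ZMod.lift_coe]; exact natCast_zsmul x w.val
  rw [← hf, ← hf, ← hf, map_sub]

section Admissible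

omit [Fintype ιJ] [Fintype ιG]

lemma inClass.pow_dvd_val {p s k θ : ℕ} [NeZero (p ^ s)] {x : Fin k → ZMod (p ^ s)}
    (h : inClass p s k θ x) (l : Fin k) : p ^ θ ∣ (x l).val := by
  unfold inClass at h
  split_ifs at h with hθ
  · exact (ZMod.pow_dvd_val_iff_mem_zmultiples hθ.le _).mpr (h.1 l)
  · simp [h]

lemma inClass.exists_val_eq_pow_mul {p s k θ : ℕ} [NeZero (p ^ s)] {x : Fin k → ZMod (p ^ s)}
    (h : inClass p s k θ x) (hθ : θ < s) : ∃ l u, (x l).val = p ^ θ * u ∧ ¬ p ∣ u := by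
  rw [inClass, if_pos hθ] at h
  obtain ⟨hall, hnot⟩ := h
  push Not at hnot
  obtain ⟨l, hl⟩ := hnot
  obtain ⟨u, hu⟩ := (ZMod.pow_dvd_val_iff_mem_zmultiples hθ.le _).mpr (hall l)
  refine ⟨l, u, hu, fun ⟨t, ht⟩ => hl ((ZMod.pow_dvd_val_iff_mem_zmultiples hθ _).mp ⟨t, ?_⟩)⟩
  rw [hu, ht, pow_succ]
  ring

def genSubgroup (Q S : ιJ → ℕ) (P R : ιG → ℕ) (i : ιJ) (j : ιG) :
    AddSubgroup (ZMod (P j ^ R j)) where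
  carrier := {x | GenOK ιJ ιG Q S P R i j x}
  zero_mem' := ⟨fun _ => rfl, fun _ => zero_mem _⟩
  add_mem' := fun ⟨hx₁, hx₂⟩ ⟨hy₁, hy₂⟩ =>
    ⟨fun h => by rw [hx₁ h, hy₁ h, add_zero], fun h => add_mem (hx₂ h) (hy₂ h)⟩
  neg_mem' := fun ⟨hx₁, hx₂⟩ => ⟨fun h => by rw [hx₁ h, neg_zero], fun h => neg_mem (hx₂ h)⟩

instance (Q S : ιJ → ℕ) (P R : ιG → ℕ) (i : ιJ) (j : ιG) :
    AddCommGroup {x : ZMod (P j ^ R j) // GenOK ιJ ιG Q S P R i j x} :=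
  inferInstanceAs (AddCommGroup (genSubgroup ιJ ιG Q S P R i j))

@[simp] lemma GenOK.coe_zero {Q S : ιJ → ℕ} {P R : ιG → ℕ} {i : ιJ} {j : ιG} :
    ((0 : {x : ZMod (P j ^ R j) // GenOK ιJ ιG Q S P R i j x}) : ZMod (P j ^ R j)) = 0 := rfl

@[simp] lemma GenOK.coe_add {Q S : ιJ → ℕ} {P R : ιG → ℕ} {i : ιJ} {j : ιG}
    (x y : {x : ZMod (P j ^ R j) // GenOK ιJ ιG Q S P R i j x}) :
    ((x + y : {x : ZMod (P j ^ R j) // GenOK ιJ ιG Q S P R i j x}) : ZMod (P j ^ R j))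
      = x + y := rfl

variable {ιJ ιG} {Q S : ιJ → ℕ} {P R : ιG → ℕ} in
/-- `ZMod.val` is not additive, but `Q i ^ S i` kills every admissible generator. -/
lemma GenOK.val_sub_nsmul {i : ιJ} {j : ιG} {x : ZMod (P j ^ R j)}
    (hx : GenOK ιJ ιG Q S P R i j x) (hP : 0 < P j) (u v : ZMod (Q i ^ S i)) :
    (u - v).val • x = u.val • x - v.val • x := by
  by_cases hqp : Q i = P j
  · have : NeZero (Q i ^ S i) := ⟨by rw [hqp]; positivity⟩
    refine ZMod.val_sub_nsmul ?_ u v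
    obtain ⟨c, rfl⟩ := ZMod.mem_zmultiples_iff_exists_mul.mp (hx.2 hqp)
    rw [nsmul_eq_mul, hqp, Nat.cast_pow, mul_left_comm, ← pow_add,
      ZMod.pow_eq_zero_of_le (by omega), mul_zero]
  · simp [hx.1 hqp]

end Admissible

/-- The paper's `H_θ̂`. -/
def thetaSubgroup (Q S k : ιJ → ℕ) (P R : ιG → ℕ) (θ : ιJ → ℕ) : AddSubgroup (GGrp ιG P R) where
  carrier := {h | ∀ j, h j ∈ zmultiples ((P j : ZMod (P j ^ R j)) ^ thetaG ιJ ιG Q S k P R θ j)}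
  zero_mem' _ := zero_mem _
  add_mem' hx hy j := add_mem (hx j) (hy j)
  neg_mem' hx j := neg_mem (hx j)

section Encoding

variable {ιJ ιG} {Q S k : ιJ → ℕ} {P R : ιG → ℕ}

omit [Fintype ιG]

variable (P R) in
noncomputable def encodeHom (a : JGrp ιJ Q S k) : Gen ιJ ιG Q S k P R →+ GGrp ιG P R :=
  AddMonoidHom.mk' (fun g => encode ιJ ιG Q S k P R g a) fun g g' => by
    funext j
    simp [encode, smul_add, Finset.sum_add_distrib]

lemma encodeHom_sub_apply (hP : ∀ j, 0 < P j) (a b : JGrp ιJ Q S k)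
    (g : Gen ιJ ιG Q S k P R) (j : ιG) :
    (encodeHom P R b - encodeHom P R a) g j
      = ∑ i, ∑ l, (b i l - a i l).val • (g i j l : ZMod (P j ^ R j)) := by
  simp only [AddMonoidHom.sub_apply, Pi.sub_apply, encodeHom, AddMonoidHom.mk'_apply, encode,
    ← Finset.sum_sub_distrib, (g _ j _).2.val_sub_nsmul (hP j)]

lemma encode_single [DecidableEq ιJ] [DecidableEq ιG] (i₀ : ιJ) (j₀ : ιG) (l₀ : Fin (k i₀))
    (c : {x : ZMod (P j₀ ^ R j₀) // GenOK ιJ ιG Q S P R i₀ j₀ x}) (a : JGrp ιJ Q S k) :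
    encode ιJ ιG Q S k P R (Pi.single i₀ (Pi.single j₀ (Pi.single l₀ c))) a
      = Pi.single j₀ ((a i₀ l₀).val • (c : ZMod (P j₀ ^ R j₀))) := by
  funext j
  rw [encode, Fintype.sum_eq_single i₀ fun i hi => by simp [Pi.single_eq_of_ne hi],
    Pi.single_eq_same]
  rcases eq_or_ne j j₀ with rfl | hj
  · rw [Fintype.sum_eq_single l₀ fun l hl => by simp [Pi.single_eq_of_ne hl]]
    simp
  · simp [Pi.single_eq_of_ne hj]

variable {θ : ιJ → ℕ} {a b : JGrp ιJ Q S k}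

lemma range_encodeHom_sub_le (hP : ∀ j, 0 < P j)
    (hb : ∀ i, inClass (Q i) (S i) (k i) (θ i) (b i - a i)) :
    (encodeHom P R b - encodeHom P R a).range ≤ thetaSubgroup ιJ ιG Q S k P R θ := by
  rintro _ ⟨g, rfl⟩ j
  rw [encodeHom_sub_apply hP]
  refine sum_mem fun i _ => sum_mem fun l _ => ?_
  by_cases hqp : Q i = P j
  · have : NeZero (Q i ^ S i) := ⟨by rw [hqp]; exact pow_ne_zero _ (hP j).ne'⟩
    obtain ⟨t, ht⟩ := (hb i).pow_dvd_val l
    obtain ⟨c, hc⟩ := ZMod.mem_zmultiples_iff_exists_mul.mp ((g i j l).2.2 hqp)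
    have hle : thetaG ιJ ιG Q S k P R θ j ≤ R j - S i + θ i := Nat.sInf_le ⟨i, hqp, l.pos, rfl⟩
    refine ZMod.mem_zmultiples_iff_exists_mul.mpr
      ⟨t * c * P j ^ (R j - S i + θ i - thetaG ιJ ιG Q S k P R θ j), ?_⟩
    rw [mul_assoc, pow_sub_mul_pow _ hle, nsmul_eq_mul, ← hc, ← Pi.sub_apply, ht, hqp]
    push_cast
    ring
  · simp [(g i j l).2.1 hqp]

lemma single_mem_range_encodeHom_sub [DecidableEq ιG] (hP : ∀ j, (P j).Prime)
    (hcover : ∀ j, ∃ i, Q i = P j ∧ 0 < k i)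
    (hb : ∀ i, inClass (Q i) (S i) (k i) (θ i) (b i - a i)) (j : ιG) :
    Pi.single j ((P j : ZMod (P j ^ R j)) ^ thetaG ιJ ιG Q S k P R θ j)
      ∈ (encodeHom P R b - encodeHom P R a).range := by
  obtain ⟨i₀, hqp, -, hτ⟩ : thetaG ιJ ιG Q S k P R θ j ∈
      {n | ∃ i, Q i = P j ∧ 0 < k i ∧ n = R j - S i + θ i} :=
    Nat.sInf_mem (let ⟨i, hi, hk⟩ := hcover j; ⟨_, i, hi, hk, rfl⟩)
  by_cases hr : R j ≤ thetaG ιJ ιG Q S k P R θ j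
  · rw [ZMod.pow_eq_zero_of_le hr, Pi.single_zero]
    exact zero_mem _
  have : NeZero (Q i₀ ^ S i₀) := ⟨by rw [hqp]; exact pow_ne_zero _ (hP j).ne_zero⟩
  obtain ⟨l₀, u, hu, hpu⟩ := (hb i₀).exists_val_eq_pow_mul (by omega)
  have hcop : u.Coprime (P j ^ R j) :=
    ((Nat.coprime_comm.mp ((hP j).coprime_iff_not_dvd.mpr (hqp ▸ hpu)))).pow_right _
  let c : ZMod (P j ^ R j) := ↑(ZMod.unitOfCoprime u hcop)⁻¹ * P j ^ (R j - S i₀)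
  have hc : GenOK ιJ ιG Q S P R i₀ j c :=
    ⟨fun h => absurd hqp h, fun _ => ZMod.mem_zmultiples_iff_exists_mul.mpr ⟨_, rfl⟩⟩
  classical
  refine ⟨Pi.single i₀ (Pi.single j (Pi.single l₀ ⟨c, hc⟩)), ?_⟩
  simp only [AddMonoidHom.sub_apply, encodeHom, AddMonoidHom.mk'_apply, encode_single,
    ← Pi.single_sub, ← hc.val_sub_nsmul (hP j).pos]
  congr 1
  have hu' : ((b i₀ l₀ - a i₀ l₀).val : ZMod (P j ^ R j)) = P j ^ θ i₀ * u := by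
    rw [← Pi.sub_apply, hu, hqp, Nat.cast_mul, Nat.cast_pow]
  have hunit : (u : ZMod (P j ^ R j)) * ↑(ZMod.unitOfCoprime u hcop)⁻¹ = 1 := by
    rw [← ZMod.coe_unitOfCoprime u hcop, Units.mul_inv]
  rw [nsmul_eq_mul, hu', hτ, pow_add]
  linear_combination ((P j : ZMod (P j ^ R j)) ^ θ i₀ * P j ^ (R j - S i₀)) * hunit

lemma range_encodeHom_sub [Fintype ιG] (hP : ∀ j, (P j).Prime)
    (hcover : ∀ j, ∃ i, Q i = P j ∧ 0 < k i)
    (hb : ∀ i, inClass (Q i) (S i) (k i) (θ i) (b i - a i)) :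
    (encodeHom P R b - encodeHom P R a).range = thetaSubgroup ιJ ιG Q S k P R θ := by
  classical
  refine le_antisymm (range_encodeHom_sub_le (fun j => (hP j).pos) hb) fun w hw => ?_
  rw [← Finset.univ_sum_single w]
  refine sum_mem fun j _ => ?_
  obtain ⟨n, hn⟩ := mem_zmultiples_iff.mp (hw j)
  rw [← hn, Pi.single_smul]
  exact zsmul_mem (single_mem_range_encodeHom_sub hP hcover hb j) n

end Encoding

theorem stmt17 (Q S k : ιJ → ℕ) (P R : ιG → ℕ)
    (hP : ∀ j, (P j).Prime)
    (hcover : ∀ j, ∃ i, Q i = P j ∧ 0 < k i)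
    (θ : ιJ → ℕ)
    (a b : JGrp ιJ Q S k)
    (hb : ∀ i, inClass (Q i) (S i) (k i) (θ i) (b i - a i))
    (x y : GGrp ιG P R) :
    ((∀ j, y j - x j ∈
        zmultiples ((P j : ZMod (P j ^ R j)) ^ thetaG ιJ ιG Q S k P R θ j)) →
      (Nat.card {gv : Gen ιJ ιG Q S k P R × GGrp ιG P R //
          encode ιJ ιG Q S k P R gv.1 a + gv.2 = x ∧
          encode ιJ ιG Q S k P R gv.1 b + gv.2 = y} : ℝ) /
        (Nat.card (Gen ιJ ιG Q S k P R × GGrp ιG P R) : ℝ)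
      = ((Nat.card (GGrp ιG P R) : ℝ) *
          (Nat.card {h : GGrp ιG P R // ∀ j, h j ∈
            zmultiples ((P j : ZMod (P j ^ R j)) ^ thetaG ιJ ιG Q S k P R θ j)} : ℝ))⁻¹) ∧
    ((¬ ∀ j, y j - x j ∈
        zmultiples ((P j : ZMod (P j ^ R j)) ^ thetaG ιJ ιG Q S k P R θ j)) →
      (Nat.card {gv : Gen ιJ ιG Q S k P R × GGrp ιG P R //
          encode ιJ ιG Q S k P R gv.1 a + gv.2 = x ∧
          encode ιJ ιG Q S k P R gv.1 b + gv.2 = y} : ℝ) /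
        (Nat.card (Gen ιJ ιG Q S k P R × GGrp ιG P R) : ℝ) = 0) := by
  have (j : ιG) : NeZero (P j ^ R j) := ⟨pow_ne_zero _ (hP j).ne_zero⟩
  have hrange := range_encodeHom_sub (R := R) hP hcover hb
  refine ⟨fun hxy => ?_, fun hxy => ?_⟩
  · have hmem : y - x ∈ (encodeHom P R b - encodeHom P R a).range := hrange ▸ hxy
    have key := card_ditheredPair_div_of_mem (encodeHom P R a) (encodeHom P R b) hmem
    rwa [hrange] at key
  · have hmem : y - x ∉ (encodeHom P R b - encodeHom P R a).range := hrange ▸ hxy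
    have key := card_ditheredPair_eq_zero_of_notMem (encodeHom P R a) (encodeHom P R b) hmem
    simp only [encodeHom, AddMonoidHom.mk'_apply] at key
    rw [key, Nat.cast_zero, zero_div]

end GroupCodeEnsemble
end
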